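/- (Proposition 1, Cuturi–Doucet) The Legendre–Fenchel conjugate of the Sinkhorn distance MK_λ is given in closed form: for every (u,v) ∈ ℝ^{Ma}×ℝ^{Mb}, the supremum over (a,b) ∈ S of ⟨a,u⟩ + ⟨b,v⟩ − MK_λ(a,b) equals (1/λ) ∑_{i,j} e^{λ(u_i + v_j − C_{ij}) − 1}. -/

import Mathlib

open scoped BigOperators

/-- The transport polytope `P(a,b)`: nonnegative matrices with row sums `a`
and column sums `b`. -/
def transportPolytope {Ma Mb : ℕ} (a : Fin Ma → ℝ) (b : Fin Mb → ℝ) :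
    Set (Matrix (Fin Ma) (Fin Mb) ℝ) :=
  {P | (∀ i j, 0 ≤ P i j) ∧ (∀ i, ∑ j, P i j = a i) ∧ (∀ j, ∑ i, P i j = b j)}

/-- The entropy-regularized transport cost `⟨P,C⟩ + (1/λ)⟨P, log P⟩`.
(Note `Real.log 0 = 0` in Mathlib, so the convention `0 · log 0 = 0` holds.) -/
noncomputable def entTransportCost {Ma Mb : ℕ} (C : Matrix (Fin Ma) (Fin Mb) ℝ)
    (lam : ℝ) (P : Matrix (Fin Ma) (Fin Mb) ℝ) : ℝ :=
  (∑ i, ∑ j, P i j * C i j) + (1 / lam) * ∑ i, ∑ j, P i j * Real.log (P i j)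

/-- The Sinkhorn distance `MK_λ(a,b) = min_{P ∈ P(a,b)} ⟨P,C⟩ + (1/λ)⟨P, log P⟩`. -/
noncomputable def MKlam {Ma Mb : ℕ} (C : Matrix (Fin Ma) (Fin Mb) ℝ) (lam : ℝ)
    (a : Fin Ma → ℝ) (b : Fin Mb → ℝ) : ℝ :=
  sInf (entTransportCost C lam '' transportPolytope a b)

/-!
Pointwise, `t ↦ t (x - log t)` is maximised at `t = e^{x-1}` with value `e^{x-1}`
(Fenchel–Young for the entropy). Writing `⟨a,u⟩ + ⟨b,v⟩ - cost(P)` as a sum over the entries of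
any plan `P ∈ P(a,b)` bounds it entrywise by the Gibbs kernel `e^{λ(u_i+v_j-C_ij)-1}/λ`, and the
kernel itself is a plan, with positive marginals, attaining the bound.
-/

open Finset Real

lemma mul_sub_log_le_exp_sub_one {t : ℝ} (ht : 0 ≤ t) (x : ℝ) :
    t * (x - log t) ≤ exp (x - 1) := by
  rcases ht.eq_or_lt with rfl | ht
  · simpa using (exp_pos _).le
  · have h := log_le_sub_one_of_pos (div_pos (exp_pos (x - 1)) ht)
    rw [log_div (exp_pos _).ne' ht.ne', log_exp] at h
    calc t * (x - log t) ≤ t * (exp (x - 1) / t) := by gcongr; linarith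
      _ = exp (x - 1) := mul_div_cancel₀ _ ht.ne'

lemma transportPolytope_nonempty {Ma Mb : ℕ} {a : Fin Ma → ℝ} {b : Fin Mb → ℝ}
    (ha : ∀ i, 0 ≤ a i) (hb : ∀ j, 0 ≤ b j) (hab : ∑ i, a i = ∑ j, b j) :
    (transportPolytope a b).Nonempty := by
  have hdiv {c : ℝ} (hc : ∑ i, a i = 0 → c = 0) : c * (∑ i, a i) / ∑ i, a i = c := by
    rcases eq_or_ne (∑ i, a i) 0 with h | h
    · simp [hc h]
    · exact mul_div_cancel_right₀ c h
  refine ⟨fun i j => a i * b j / ∑ k, a k, fun i j => ?_, fun i => ?_, fun j => ?_⟩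
  · exact div_nonneg (mul_nonneg (ha i) (hb j)) (sum_nonneg fun k _ => ha k)
  · rw [← sum_div, ← mul_sum, ← hab]
    exact hdiv fun h => (sum_eq_zero_iff_of_nonneg fun k _ => ha k).1 h i (mem_univ i)
  · rw [← sum_div, ← sum_mul, mul_comm]
    exact hdiv fun h => (sum_eq_zero_iff_of_nonneg fun k _ => hb k).1 (hab.symm.trans h) j
      (mem_univ j)

section Conjugate

variable {Ma Mb : ℕ} (C : Matrix (Fin Ma) (Fin Mb) ℝ) (lam : ℝ) (u : Fin Ma → ℝ) (v : Fin Mb → ℝ)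

noncomputable def gibbsKernel : Matrix (Fin Ma) (Fin Mb) ℝ :=
  fun i j => exp (lam * (u i + v j - C i j) - 1)

lemma sum_mul_add_sum_mul_eq_of_marginals {a : Fin Ma → ℝ} {b : Fin Mb → ℝ}
    {P : Matrix (Fin Ma) (Fin Mb) ℝ} (hrow : ∀ i, ∑ j, P i j = a i)
    (hcol : ∀ j, ∑ i, P i j = b j) :
    ∑ i, a i * u i + ∑ j, b j * v j = ∑ i, ∑ j, P i j * (u i + v j) := by
  simp_rw [← hrow, ← hcol, sum_mul, mul_add, sum_add_distrib]
  rw [sum_comm (f := fun i j => P i j * v j)]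

lemma sum_mul_add_sum_mul_sub_entTransportCost (hlam : lam ≠ 0) {a : Fin Ma → ℝ}
    {b : Fin Mb → ℝ} {P : Matrix (Fin Ma) (Fin Mb) ℝ} (hrow : ∀ i, ∑ j, P i j = a i)
    (hcol : ∀ j, ∑ i, P i j = b j) :
    ∑ i, a i * u i + ∑ j, b j * v j - entTransportCost C lam P
      = 1 / lam * ∑ i, ∑ j, P i j * (lam * (u i + v j - C i j) - log (P i j)) := by
  rw [sum_mul_add_sum_mul_eq_of_marginals u v hrow hcol, entTransportCost]
  simp only [mul_sum, ← sum_add_distrib, ← sum_sub_distrib]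
  refine sum_congr rfl fun i _ => sum_congr rfl fun j _ => ?_
  field_simp
  ring

lemma sum_mul_add_sum_mul_sub_le_entTransportCost (hlam : 0 < lam) {a : Fin Ma → ℝ}
    {b : Fin Mb → ℝ} {P : Matrix (Fin Ma) (Fin Mb) ℝ} (hP : P ∈ transportPolytope a b) :
    ∑ i, a i * u i + ∑ j, b j * v j - 1 / lam * ∑ i, ∑ j, gibbsKernel C lam u v i j
      ≤ entTransportCost C lam P := by
  obtain ⟨hnonneg, hrow, hcol⟩ := hP
  have key := sum_mul_add_sum_mul_sub_entTransportCost C lam u v hlam.ne' hrow hcol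
  have hle : ∑ i, ∑ j, P i j * (lam * (u i + v j - C i j) - log (P i j))
      ≤ ∑ i, ∑ j, gibbsKernel C lam u v i j :=
    sum_le_sum fun i _ => sum_le_sum fun j _ => mul_sub_log_le_exp_sub_one (hnonneg i j) _
  have := mul_le_mul_of_nonneg_left hle (one_div_nonneg.2 hlam.le)
  linarith

lemma gibbsKernel_mem_transportPolytope :
    gibbsKernel C lam u v ∈ transportPolytope (fun i => ∑ j, gibbsKernel C lam u v i j)
      (fun j => ∑ i, gibbsKernel C lam u v i j) :=
  ⟨fun _ _ => (exp_pos _).le, fun _ => rfl, fun _ => rfl⟩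

lemma entTransportCost_gibbsKernel (hlam : lam ≠ 0) :
    entTransportCost C lam (gibbsKernel C lam u v)
      = ∑ i, (∑ j, gibbsKernel C lam u v i j) * u i
        + ∑ j, (∑ i, gibbsKernel C lam u v i j) * v j
        - 1 / lam * ∑ i, ∑ j, gibbsKernel C lam u v i j := by
  have key := sum_mul_add_sum_mul_sub_entTransportCost C lam u v hlam
    (fun i => rfl : ∀ i, ∑ j, gibbsKernel C lam u v i j = _)
    (fun j => rfl : ∀ j, ∑ i, gibbsKernel C lam u v i j = _)
  simp only [gibbsKernel, log_exp, sub_sub_cancel, mul_one] at key ⊢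
  linarith

lemma mem_lowerBounds_entTransportCost_image (hlam : 0 < lam) (a : Fin Ma → ℝ)
    (b : Fin Mb → ℝ) :
    ∑ i, a i * u i + ∑ j, b j * v j - 1 / lam * ∑ i, ∑ j, gibbsKernel C lam u v i j
      ∈ lowerBounds (entTransportCost C lam '' transportPolytope a b) := by
  rintro _ ⟨P, hP, rfl⟩
  exact sum_mul_add_sum_mul_sub_le_entTransportCost C lam u v hlam hP

lemma le_MKlam (hlam : 0 < lam) {a : Fin Ma → ℝ} {b : Fin Mb → ℝ}
    (hne : (transportPolytope a b).Nonempty) :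
    ∑ i, a i * u i + ∑ j, b j * v j - 1 / lam * ∑ i, ∑ j, gibbsKernel C lam u v i j
      ≤ MKlam C lam a b :=
  le_csInf (hne.image _) (mem_lowerBounds_entTransportCost_image C lam u v hlam a b)

lemma MKlam_gibbsKernel_marginals (hlam : 0 < lam) :
    MKlam C lam (fun i => ∑ j, gibbsKernel C lam u v i j)
        (fun j => ∑ i, gibbsKernel C lam u v i j)
      = ∑ i, (∑ j, gibbsKernel C lam u v i j) * u i
        + ∑ j, (∑ i, gibbsKernel C lam u v i j) * v j
        - 1 / lam * ∑ i, ∑ j, gibbsKernel C lam u v i j := by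
  have hmem := gibbsKernel_mem_transportPolytope C lam u v
  refine le_antisymm ?_ (le_MKlam C lam u v hlam ⟨_, hmem⟩)
  rw [← entTransportCost_gibbsKernel C lam u v hlam.ne']
  exact csInf_le ⟨_, mem_lowerBounds_entTransportCost_image C lam u v hlam _ _⟩ ⟨_, hmem, rfl⟩

end Conjugate

/-- (Cuturi–Doucet) The Legendre–Fenchel conjugate of the Sinkhorn distance:
for every `(u,v)`, the supremum over `(a,b) ∈ S` of `⟨a,u⟩ + ⟨b,v⟩ − MK_λ(a,b)`
equals `(1/λ) ∑_{i,j} e^{λ(u_i + v_j − C_{ij}) − 1}`. -/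
theorem sinkhorn_conjugate (Ma Mb : ℕ) (hMa : 0 < Ma) (hMb : 0 < Mb)
    (C : Matrix (Fin Ma) (Fin Mb) ℝ) (lam : ℝ) (hlam : 0 < lam)
    (u : Fin Ma → ℝ) (v : Fin Mb → ℝ) :
    sSup {x : ℝ | ∃ (a : Fin Ma → ℝ) (b : Fin Mb → ℝ),
        (∀ i, 0 < a i) ∧ (∀ j, 0 < b j) ∧ (∑ i, a i = ∑ j, b j) ∧
        x = ∑ i, a i * u i + ∑ j, b j * v j - MKlam C lam a b}
      = (1 / lam) * ∑ i, ∑ j, Real.exp (lam * (u i + v j - C i j) - 1) := by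
  have : Nonempty (Fin Ma) := Fin.pos_iff_nonempty.mp hMa
  have : Nonempty (Fin Mb) := Fin.pos_iff_nonempty.mp hMb
  set G := gibbsKernel C lam u v
  refine IsGreatest.csSup_eq ⟨⟨fun i => ∑ j, G i j, fun j => ∑ i, G i j,
    fun i => sum_pos (fun j _ => exp_pos _) univ_nonempty,
    fun j => sum_pos (fun i _ => exp_pos _) univ_nonempty, sum_comm, ?_⟩, ?_⟩
  · rw [MKlam_gibbsKernel_marginals C lam u v hlam]
    simp only [G, gibbsKernel]
    ring
  · rintro _ ⟨a, b, ha, hb, hab, rfl⟩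
    have := le_MKlam C lam u v hlam
      (transportPolytope_nonempty (fun i => (ha i).le) (fun j => (hb j).le) hab)
    simp only [gibbsKernel] at this
    linarith
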